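/- Let v¹, v², v³ : ℝ × ℝ → ℝ be smooth solutions of the heat equation v_t + v_xx = 0 whose Wronskian W(v̄) := det[v̄, v̄_x, v̄_xx] is nonzero at every point, and define ξ⁰ := (∂_x W(v̄))/W(v̄), η¹ := det[v̄, v̄_xx, v̄_xxx]/W(v̄), η⁰ := −2·det[v̄_x, v̄_xx, v̄_xxx]/W(v̄). Let c1, c2, c3 be real constants, not all zero, and set σ := c1·v¹ + c2·v² + c3·v³. Then on the open set where σ ≠ 0, the function u := 2 σ_x / σ solves the Burgers equation u_t + u·u_x + u_xx = 0 and satisfies the invariant surface condition Q[u] = 0, i.e. u_t + (−u/2 + ξ⁰)·u_x = u³/4 − (ξ⁰/2)·u² + η¹·u + η⁰. -/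

import Mathlib

/-- Partial derivative with respect to the first variable `t`. -/
noncomputable def pt (f : ℝ × ℝ → ℝ) : ℝ × ℝ → ℝ :=
  fun p => deriv (fun s => f (s, p.2)) p.1

/-- Partial derivative with respect to the second variable `x`. -/
noncomputable def px (f : ℝ × ℝ → ℝ) : ℝ × ℝ → ℝ :=
  fun p => deriv (fun s => f (p.1, s)) p.2

/-- Determinant of the 3×3 matrix with columns `a`, `b`, `c`. -/
noncomputable def det3 (a b c : Fin 3 → ℝ) : ℝ :=
  Matrix.det !![a 0, b 0, c 0; a 1, b 1, c 1; a 2, b 2, c 2]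

lemma sliceX {f : ℝ × ℝ → ℝ} (hf : ContDiff ℝ (⊤ : ℕ∞) f) (p : ℝ × ℝ) :
    HasDerivAt (fun s => f (p.1, s)) (px f p) p.2 := by
  have hL : HasDerivAt (fun s : ℝ => ((p.1, s) : ℝ × ℝ)) (0, 1) p.2 :=
    HasDerivAt.prodMk (hasDerivAt_const _ _) (hasDerivAt_id _)
  have hF : HasFDerivAt f (fderiv ℝ f p) p :=
    (hf.differentiable (by simp) p).hasFDerivAt
  have h : HasDerivAt (fun s => f (p.1, s)) (fderiv ℝ f p (0, 1)) p.2 :=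
    hF.comp_hasDerivAt p.2 hL
  have e : px f p = fderiv ℝ f p (0, 1) := h.deriv
  rw [e]; exact h

lemma sliceT {f : ℝ × ℝ → ℝ} (hf : ContDiff ℝ (⊤ : ℕ∞) f) (p : ℝ × ℝ) :
    HasDerivAt (fun s => f (s, p.2)) (pt f p) p.1 := by
  have hL : HasDerivAt (fun s : ℝ => ((s, p.2) : ℝ × ℝ)) (1, 0) p.1 :=
    HasDerivAt.prodMk (hasDerivAt_id _) (hasDerivAt_const _ _)
  have hF : HasFDerivAt f (fderiv ℝ f p) p :=
    (hf.differentiable (by simp) p).hasFDerivAt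
  have h : HasDerivAt (fun s => f (s, p.2)) (fderiv ℝ f p (1, 0)) p.1 :=
    hF.comp_hasDerivAt p.1 hL
  have e : pt f p = fderiv ℝ f p (1, 0) := h.deriv
  rw [e]; exact h

lemma px_eq {f : ℝ × ℝ → ℝ} (hf : ContDiff ℝ (⊤ : ℕ∞) f) (p : ℝ × ℝ) :
    px f p = fderiv ℝ f p (0, 1) := by
  have hL : HasDerivAt (fun s : ℝ => ((p.1, s) : ℝ × ℝ)) (0, 1) p.2 :=
    HasDerivAt.prodMk (hasDerivAt_const _ _) (hasDerivAt_id _)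
  exact (((hf.differentiable (by simp) p).hasFDerivAt).comp_hasDerivAt p.2 hL).deriv

lemma pt_eq {f : ℝ × ℝ → ℝ} (hf : ContDiff ℝ (⊤ : ℕ∞) f) (p : ℝ × ℝ) :
    pt f p = fderiv ℝ f p (1, 0) := by
  have hL : HasDerivAt (fun s : ℝ => ((s, p.2) : ℝ × ℝ)) (1, 0) p.1 :=
    HasDerivAt.prodMk (hasDerivAt_id _) (hasDerivAt_const _ _)
  exact (((hf.differentiable (by simp) p).hasFDerivAt).comp_hasDerivAt p.1 hL).deriv

lemma contDiff_px {f : ℝ × ℝ → ℝ} (hf : ContDiff ℝ (⊤ : ℕ∞) f) : ContDiff ℝ (⊤ : ℕ∞) (px f) := by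
  have e : px f = fun p => fderiv ℝ f p (0, 1) := funext fun p => px_eq hf p
  rw [e]
  exact (hf.fderiv_right (by simp)).clm_apply contDiff_const

lemma contDiff_pt {f : ℝ × ℝ → ℝ} (hf : ContDiff ℝ (⊤ : ℕ∞) f) : ContDiff ℝ (⊤ : ℕ∞) (pt f) := by
  have e : pt f = fun p => fderiv ℝ f p (1, 0) := funext fun p => pt_eq hf p
  rw [e]
  exact (hf.fderiv_right (by simp)).clm_apply contDiff_const

lemma clairaut {f : ℝ × ℝ → ℝ} (hf : ContDiff ℝ (⊤ : ℕ∞) f) (p : ℝ × ℝ) :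
    pt (px f) p = px (pt f) p := by
  have hdf : Differentiable ℝ (fderiv ℝ f) := (hf.fderiv_right (m := (⊤ : ℕ∞)) (by simp)).differentiable (by simp)
  have hsymm := second_derivative_symmetric
      (fun y => (hf.differentiable (by simp) y).hasFDerivAt) (hdf p).hasFDerivAt
  have e1 : px f = fun q => fderiv ℝ f q (0, 1) := funext fun q => px_eq hf q
  have e2 : pt f = fun q => fderiv ℝ f q (1, 0) := funext fun q => pt_eq hf q
  rw [e1, e2, pt_eq ((hf.fderiv_right (by simp)).clm_apply contDiff_const) p,
    px_eq ((hf.fderiv_right (by simp)).clm_apply contDiff_const) p,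
    fderiv_clm_apply (hdf p) (differentiableAt_const _),
    fderiv_clm_apply (hdf p) (differentiableAt_const _)]
  simp [hsymm (1, 0) (0, 1)]

lemma px_neg (g : ℝ × ℝ → ℝ) (q : ℝ × ℝ) : px (fun r => -(g r)) q = -(px g q) := by
  simp [px, deriv.neg]

lemma det3_expand (a b c : Fin 3 → ℝ) : det3 a b c =
    a 0 * b 1 * c 2 - a 0 * c 1 * b 2 - b 0 * a 1 * c 2 + b 0 * c 1 * a 2
      + c 0 * a 1 * b 2 - c 0 * b 1 * a 2 := by
  simp [det3, Matrix.det_fin_three]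


/-- For a nontrivial linear combination `σ = c1 v¹ + c2 v² + c3 v³` of a triple of
heat solutions with nonvanishing Wronskian, on the set where `σ ≠ 0` the function
`u = 2 σ_x / σ` solves the Burgers equation and the invariant surface condition of
the corresponding no-go reduction operator. -/
theorem stmt11 (v : Fin 3 → ℝ × ℝ → ℝ) (hv : ∀ i, ContDiff ℝ (⊤ : ℕ∞) (v i))
    (hheat : ∀ i, ∀ p : ℝ × ℝ, pt (v i) p + px (px (v i)) p = 0)
    (hW : ∀ p : ℝ × ℝ,
      det3 (fun i => v i p) (fun i => px (v i) p) (fun i => px (px (v i)) p) ≠ 0)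
    (c1 c2 c3 : ℝ) (hc : ¬(c1 = 0 ∧ c2 = 0 ∧ c3 = 0)) :
    let W : ℝ × ℝ → ℝ := fun p =>
      det3 (fun i => v i p) (fun i => px (v i) p) (fun i => px (px (v i)) p)
    let ξ0 : ℝ × ℝ → ℝ := fun p => px W p / W p
    let η1 : ℝ × ℝ → ℝ := fun p =>
      det3 (fun i => v i p) (fun i => px (px (v i)) p) (fun i => px (px (px (v i))) p)
        / W p
    let η0 : ℝ × ℝ → ℝ := fun p =>
      -2 * det3 (fun i => px (v i) p) (fun i => px (px (v i)) p)
        (fun i => px (px (px (v i))) p) / W p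
    let σ : ℝ × ℝ → ℝ := fun p => c1 * v 0 p + c2 * v 1 p + c3 * v 2 p
    let u : ℝ × ℝ → ℝ := fun p => 2 * px σ p / σ p
    ∀ p : ℝ × ℝ, σ p ≠ 0 →
      (pt u p + u p * px u p + px (px u) p = 0) ∧
      (pt u p + (-(u p) / 2 + ξ0 p) * px u p
        = (u p) ^ 3 / 4 - (ξ0 p / 2) * (u p) ^ 2 + η1 p * u p + η0 p) := by
  intro W ξ0 η1 η0 σ u p hσp
  have hσs : ContDiff ℝ (⊤ : ℕ∞) σ :=
    ((contDiff_const.mul (hv 0)).add (contDiff_const.mul (hv 1))).add (contDiff_const.mul (hv 2))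
  have hσ1 : px σ = fun q => c1 * px (v 0) q + c2 * px (v 1) q + c3 * px (v 2) q := by
    funext q
    exact ((((sliceX (hv 0) q).const_mul c1).add ((sliceX (hv 1) q).const_mul c2)).add
      ((sliceX (hv 2) q).const_mul c3)).deriv
  have hσ2 : px (px σ) = fun q =>
      c1 * px (px (v 0)) q + c2 * px (px (v 1)) q + c3 * px (px (v 2)) q := by
    funext q
    rw [hσ1]
    exact ((((sliceX (contDiff_px (hv 0)) q).const_mul c1).add
      ((sliceX (contDiff_px (hv 1)) q).const_mul c2)).add
      ((sliceX (contDiff_px (hv 2)) q).const_mul c3)).deriv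
  have hσ3 : px (px (px σ)) = fun q =>
      c1 * px (px (px (v 0))) q + c2 * px (px (px (v 1))) q + c3 * px (px (px (v 2))) q := by
    funext q
    rw [hσ2]
    exact ((((sliceX (contDiff_px (contDiff_px (hv 0))) q).const_mul c1).add
      ((sliceX (contDiff_px (contDiff_px (hv 1))) q).const_mul c2)).add
      ((sliceX (contDiff_px (contDiff_px (hv 2))) q).const_mul c3)).deriv
  have hheat' : ∀ i, pt (v i) = fun q => -(px (px (v i)) q) :=
    fun i => funext fun q => by linarith [hheat i q]
  have hσt : ∀ q, pt σ q = -(px (px σ) q) := by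
    intro q
    have h : pt σ q = c1 * pt (v 0) q + c2 * pt (v 1) q + c3 * pt (v 2) q :=
      ((((sliceT (hv 0) q).const_mul c1).add ((sliceT (hv 1) q).const_mul c2)).add
        ((sliceT (hv 2) q).const_mul c3)).deriv
    rw [h]
    simp only [hσ2, hheat']
    ring
  have hptpx : ∀ i q, pt (px (v i)) q = -(px (px (px (v i))) q) := by
    intro i q
    rw [clairaut (hv i) q, hheat' i]
    exact px_neg _ q
  have hσ1t : ∀ q, pt (px σ) q = -(px (px (px σ)) q) := by
    intro q
    have h3 : px (px (px σ)) q = c1 * px (px (px (v 0))) q + c2 * px (px (px (v 1))) q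
        + c3 * px (px (px (v 2))) q := by rw [hσ3]
    rw [h3, hσ1]
    have h : pt (fun r => c1 * px (v 0) r + c2 * px (v 1) r + c3 * px (v 2) r) q
        = c1 * pt (px (v 0)) q + c2 * pt (px (v 1)) q + c3 * pt (px (v 2)) q :=
      ((((sliceT (contDiff_px (hv 0)) q).const_mul c1).add
        ((sliceT (contDiff_px (hv 1)) q).const_mul c2)).add
        ((sliceT (contDiff_px (hv 2)) q).const_mul c3)).deriv
    rw [h, hptpx 0 q, hptpx 1 q, hptpx 2 q]
    ring
  -- first-order derivatives of u
  have hptu : pt u p = (2 * pt (px σ) p * σ p - 2 * px σ p * pt σ p) / σ p ^ 2 :=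
    (((sliceT (contDiff_px hσs) p).const_mul 2).div (sliceT hσs p) hσp).deriv
  have hpxu : ∀ q, σ q ≠ 0 → px u q =
      (2 * px (px σ) q * σ q - 2 * px σ q * px σ q) / σ q ^ 2 := fun q hq =>
    (((sliceX (contDiff_px hσs) q).const_mul 2).div (sliceX hσs q) hq).deriv
  -- second x-derivative of u
  have hcont : ContinuousAt (fun s => σ (p.1, s)) p.2 :=
    (hσs.continuous.comp (continuous_const.prodMk continuous_id)).continuousAt
  have hev : ∀ᶠ s in nhds p.2, σ (p.1, s) ≠ 0 := hcont.eventually_ne hσp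
  have hev2 : (fun s => px u (p.1, s)) =ᶠ[nhds p.2] (fun s =>
      (2 * px (px σ) (p.1, s) * σ (p.1, s) - 2 * px σ (p.1, s) * px σ (p.1, s))
        / σ (p.1, s) ^ 2) :=
    hev.mono fun s hs => hpxu (p.1, s) hs
  have hpxxu := Filter.EventuallyEq.deriv_eq hev2
  have hval := ((((sliceX (contDiff_px (contDiff_px hσs)) p).const_mul 2).mul (sliceX hσs p)).sub
      (((sliceX (contDiff_px hσs) p).const_mul 2).mul (sliceX (contDiff_px hσs) p))).div
      ((sliceX hσs p).pow 2) (pow_ne_zero 2 hσp) |>.deriv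
  have hfix : px (px u) p = deriv (fun s => px u (p.1, s)) p.2 := rfl
  have hpxxu' := hfix.trans (hpxxu.trans hval)
  norm_num at hpxxu'
  -- Cramer identity
  have hWne : W p ≠ 0 := hW p
  have hcram : W p * px (px (px σ)) p =
      det3 (fun i => px (v i) p) (fun i => px (px (v i)) p) (fun i => px (px (px (v i))) p) * σ p
      - det3 (fun i => v i p) (fun i => px (px (v i)) p) (fun i => px (px (px (v i))) p) * px σ p
      + det3 (fun i => v i p) (fun i => px (v i) p) (fun i => px (px (px (v i))) p)
          * px (px σ) p := by
    have hW0 : W p = det3 (fun i => v i p) (fun i => px (v i) p) (fun i => px (px (v i)) p) :=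
      rfl
    have hσ0 : σ = fun q => c1 * v 0 q + c2 * v 1 q + c3 * v 2 q := rfl
    rw [hW0]
    simp only [hσ3]
    simp only [hσ2]
    simp only [hσ1]
    simp only [hσ0]
    simp only [det3_expand]
    ring
  have hs3 : px (px (px σ)) p =
      (det3 (fun i => px (v i) p) (fun i => px (px (v i)) p) (fun i => px (px (px (v i))) p) * σ p
      - det3 (fun i => v i p) (fun i => px (px (v i)) p) (fun i => px (px (px (v i))) p) * px σ p
      + det3 (fun i => v i p) (fun i => px (v i) p) (fun i => px (px (px (v i))) p)
          * px (px σ) p) / W p := by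
    rw [eq_div_iff hWne]; linarith [hcram]
  -- derivative of the Wronskian
  have hWx : px W p = det3 (fun i => v i p) (fun i => px (v i) p)
      (fun i => px (px (px (v i))) p) := by
    have hWfun : (fun s => W (p.1, s)) = fun s =>
        v 0 (p.1, s) * px (v 1) (p.1, s) * px (px (v 2)) (p.1, s)
        - v 0 (p.1, s) * px (px (v 1)) (p.1, s) * px (v 2) (p.1, s)
        - px (v 0) (p.1, s) * v 1 (p.1, s) * px (px (v 2)) (p.1, s)
        + px (v 0) (p.1, s) * px (px (v 1)) (p.1, s) * v 2 (p.1, s)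
        + px (px (v 0)) (p.1, s) * v 1 (p.1, s) * px (v 2) (p.1, s)
        - px (px (v 0)) (p.1, s) * px (v 1) (p.1, s) * v 2 (p.1, s) :=
      funext fun s => det3_expand _ _ _
    have hstep : px W p = deriv (fun s => W (p.1, s)) p.2 := rfl
    rw [hstep, hWfun]
    have h00 := sliceX (hv 0) p
    have h10 := sliceX (hv 1) p
    have h20 := sliceX (hv 2) p
    have h01 := sliceX (contDiff_px (hv 0)) p
    have h11 := sliceX (contDiff_px (hv 1)) p
    have h21 := sliceX (contDiff_px (hv 2)) p
    have h02 := sliceX (contDiff_px (contDiff_px (hv 0))) p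
    have h12 := sliceX (contDiff_px (contDiff_px (hv 1))) p
    have h22 := sliceX (contDiff_px (contDiff_px (hv 2))) p
    have hbig := ((((((h00.mul h11).mul h22).sub ((h00.mul h12).mul h21)).sub
      ((h01.mul h10).mul h22)).add ((h01.mul h12).mul h20)).add
      ((h02.mul h10).mul h21)).sub ((h02.mul h11).mul h20) |>.deriv
    erw [hbig]; rw [det3_expand]
    simp only [Prod.mk.eta, Pi.mul_apply]
    ring
  -- assemble
  have hu : u p = 2 * px σ p / σ p := rfl
  have hξ : ξ0 p = px W p / W p := rfl
  have hη1 : η1 p = det3 (fun i => v i p) (fun i => px (px (v i)) p)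
      (fun i => px (px (px (v i))) p) / W p := rfl
  have hη0 : η0 p = -2 * det3 (fun i => px (v i) p) (fun i => px (px (v i)) p)
      (fun i => px (px (px (v i))) p) / W p := rfl
  constructor
  · rw [hptu, hσt p, hσ1t p, hu, hpxu p hσp, hpxxu']
    field_simp
    ring
  · rw [hptu, hσt p, hσ1t p, hu, hpxu p hσp, hξ, hWx, hη1, hη0, hs3]
    field_simp
    ring
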